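/- arXiv:1011.6171 — 8 statements merged into one kernel-verified Lean document; each statement's English description precedes it below -/
import Mathlib

section
/- Let Q ∈ SO(n), y ∈ ℝ^n a unit vector, and set M = y yᵀ and sk(X) = (X − Xᵀ)/2. Then ‖2 Q sk(Qᵀ M)‖_F² = (1 + yᵀ Q y) · ‖Qᵀ y − y‖₂², where ‖·‖_F is the Frobenius norm. -/
open Matrix

/-- Skew-symmetric part of a square matrix: sk(X) = (X - Xᵀ)/2. -/
noncomputable def skewPart {n : ℕ} (X : Matrix (Fin n) (Fin n) ℝ) : Matrix (Fin n) (Fin n) ℝ :=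
  (1 / 2 : ℝ) • (X - Xᵀ)

/-- Squared Frobenius norm: ‖M‖_F² = tr(MᵀM). -/
noncomputable def frobSq {n : ℕ} (M : Matrix (Fin n) (Fin n) ℝ) : ℝ := (Mᵀ * M).trace


lemma mul_vmv {n : ℕ} (C : Matrix (Fin n) (Fin n) ℝ) (a b : Fin n → ℝ) :
    C * vecMulVec a b = vecMulVec (C *ᵥ a) b := by
  ext i j
  simp [mul_apply, vecMulVec_apply, mulVec, dotProduct, Finset.sum_mul, mul_assoc]

lemma vmv_mul {n : ℕ} (C : Matrix (Fin n) (Fin n) ℝ) (a b : Fin n → ℝ) :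
    vecMulVec a b * C = vecMulVec a (b ᵥ* C) := by
  ext i j
  simp [mul_apply, vecMulVec_apply, vecMul, dotProduct, Finset.mul_sum, mul_assoc]

lemma vmv_transpose {n : ℕ} (a b : Fin n → ℝ) : (vecMulVec a b)ᵀ = vecMulVec b a := by
  ext i j; simp [vecMulVec_apply, mul_comm]

lemma frob_diff_vmv {n : ℕ} (a b u v : Fin n → ℝ) :
    frobSq (vecMulVec a b - vecMulVec u v) =
      (a ⬝ᵥ a) * (b ⬝ᵥ b) - 2 * ((a ⬝ᵥ u) * (b ⬝ᵥ v)) + (u ⬝ᵥ u) * (v ⬝ᵥ v) := by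
  have h : frobSq (vecMulVec a b - vecMulVec u v)
      = ∑ j, ∑ i, (a i * b j - u i * v j) * (a i * b j - u i * v j) := by
    unfold frobSq
    rw [trace]
    refine Finset.sum_congr rfl fun j _ => ?_
    simp [diag, mul_apply, vecMulVec_apply, Matrix.sub_apply]
    exact Finset.sum_congr rfl fun i _ => by ring
  rw [h]
  have inner : ∀ j, ∑ i, (a i * b j - u i * v j) * (a i * b j - u i * v j)
      = (b j * b j) * (a ⬝ᵥ a) - (2 * (b j * v j)) * (a ⬝ᵥ u) + (v j * v j) * (u ⬝ᵥ u) := by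
    intro j
    simp only [dotProduct, Finset.mul_sum]
    rw [← Finset.sum_sub_distrib, ← Finset.sum_add_distrib]
    exact Finset.sum_congr rfl fun i _ => by ring
  simp only [inner]
  rw [Finset.sum_add_distrib, Finset.sum_sub_distrib, ← Finset.sum_mul, ← Finset.sum_mul,
    ← Finset.sum_mul, ← Finset.mul_sum]
  simp only [dotProduct]
  ring

theorem stmt4 {n : ℕ} (y : Fin n → ℝ) (hy : y ⬝ᵥ y = 1)
    (Q : Matrix (Fin n) (Fin n) ℝ) (hQ : Qᵀ * Q = 1) (hd : Q.det = 1) :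
    frobSq ((2 : ℝ) • (Q * skewPart (Qᵀ * vecMulVec y y))) =
      (1 + y ⬝ᵥ (Q *ᵥ y)) * ((Qᵀ *ᵥ y - y) ⬝ᵥ (Qᵀ *ᵥ y - y)) := by
  have hQQ : Q * Qᵀ = 1 := mul_eq_one_comm.mp hQ
  set u : Fin n → ℝ := Q *ᵥ y with hu
  set v : Fin n → ℝ := Qᵀ *ᵥ y with hv
  set c : ℝ := y ⬝ᵥ u with hc
  have hyv : y ⬝ᵥ v = c := by
    rw [hv, hc, hu, dotProduct_mulVec, ← mulVec_transpose, transpose_transpose,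
      dotProduct_comm]
  have hvy : v ⬝ᵥ y = c := by rw [dotProduct_comm]; exact hyv
  have huu : u ⬝ᵥ u = 1 := by
    calc u ⬝ᵥ u = (y ᵥ* Qᵀ) ⬝ᵥ u := by rw [vecMul_transpose]
      _ = y ⬝ᵥ ((Qᵀ * Q) *ᵥ y) := by rw [← dotProduct_mulVec, hu, mulVec_mulVec]
      _ = 1 := by rw [hQ, one_mulVec, hy]
  have hvv : v ⬝ᵥ v = 1 := by
    calc v ⬝ᵥ v = (y ᵥ* Q) ⬝ᵥ v := by rw [← mulVec_transpose]
      _ = y ⬝ᵥ ((Q * Qᵀ) *ᵥ y) := by rw [← dotProduct_mulVec, hv, mulVec_mulVec]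
      _ = 1 := by rw [hQQ, one_mulVec, hy]
  have hA : (2 : ℝ) • (Q * skewPart (Qᵀ * vecMulVec y y))
      = vecMulVec y y - vecMulVec u v := by
    unfold skewPart
    rw [transpose_mul, transpose_transpose, vmv_transpose]
    rw [Matrix.mul_smul, smul_smul]
    norm_num
    rw [Matrix.mul_sub, ← Matrix.mul_assoc, hQQ, Matrix.one_mul,
      vmv_mul, mul_vmv, hu, hv, ← mulVec_transpose]
  rw [hA, frob_diff_vmv, hy]
  have hrhs : (v - y) ⬝ᵥ (v - y) = 2 - 2 * c := by
    rw [sub_dotProduct, dotProduct_sub, dotProduct_sub, hvv, hvy, hyv, hy]; ring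
  rw [hrhs, hyv]
  rw [show y ⬝ᵥ u = c from rfl, huu, hvv]
  ring
end

section
/- Let B ∈ ℝ^{n×n} be a symmetric matrix such that B − αIₙ is positive definite for some α > 0. If Q ∈ SO(n) satisfies tr(B(Iₙ − Q)) = 0, then Q = Iₙ. -/
open Matrix

theorem stmt6 {n : ℕ} (B : Matrix (Fin n) (Fin n) ℝ) (hB : B.IsSymm)
    (α : ℝ) (hα : 0 < α) (hpd : (B - α • (1 : Matrix (Fin n) (Fin n) ℝ)).PosDef)
    (Q : Matrix (Fin n) (Fin n) ℝ) (hQ : Qᵀ * Q = 1) (hd : Q.det = 1)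
    (htr : (B * (1 - Q)).trace = 0) : Q = 1 := by
  -- B is positive definite
  have hBpd : B.PosDef := by
    have h1 : ((α • (1 : Matrix (Fin n) (Fin n) ℝ))).PosSemidef := by
      rw [smul_one_eq_diagonal]
      exact posSemidef_diagonal_iff.mpr fun i => hα.le
    have := hpd.add_posSemidef h1
    simpa using this
  have hQQ : Q * Qᵀ = 1 := mul_eq_one_comm.mp hQ
  have hsym : Bᵀ = B := hB
  set N : Matrix (Fin n) (Fin n) ℝ := 1 - Q with hN
  -- trace identity
  have e1 : Nᵀ * B * N = B - B * Q - Qᵀ * B + Qᵀ * B * Q := by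
    simp only [hN, transpose_sub, transpose_one]
    noncomm_ring
  have htr1 : (Qᵀ * B * Q).trace = B.trace := by
    rw [trace_mul_comm, ← mul_assoc, hQQ, one_mul]
  have htr2 : (Qᵀ * B).trace = (B * Q).trace := by
    rw [← trace_transpose, transpose_mul, transpose_transpose, hsym]
  have htrX : (Nᵀ * B * N).trace = 0 := by
    rw [e1, trace_add, trace_sub, trace_sub, htr1, htr2]
    have : (B * (1 - Q)).trace = B.trace - (B * Q).trace := by
      rw [mul_sub, mul_one, trace_sub]
    rw [this] at htr
    linarith
  -- each diagonal term is a quadratic form value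
  have hdiag : ∀ j, (Nᵀ * B * N) j j
      = dotProduct (fun i => N i j) (B *ᵥ fun i => N i j) := by
    intro j
    simp only [mul_apply, transpose_apply, dotProduct, mulVec, Finset.sum_mul,
      Finset.mul_sum]
    rw [Finset.sum_comm]
    congr 1; ext i; congr 1; ext k; ring
  have hnonneg : ∀ j, 0 ≤ (Nᵀ * B * N) j j := fun j => by
    rw [hdiag j]
    have := hBpd.posSemidef.dotProduct_mulVec_nonneg (fun i => N i j)
    simpa using this
  have hzero : ∀ j ∈ Finset.univ, (fun j => (Nᵀ * B * N) j j) j = 0 := by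
    apply (Finset.sum_eq_zero_iff_of_nonneg (fun j _ => hnonneg j)).mp
    simpa [Matrix.trace, Matrix.diag] using htrX
  have hNcol : ∀ j, (fun i => N i j) = 0 := by
    intro j
    by_contra hne
    have hpos := hBpd.dotProduct_mulVec_pos (x := fun i => N i j) hne
    have h0 : (Nᵀ * B * N) j j = 0 := by simpa using hzero j (Finset.mem_univ j)
    rw [hdiag j] at h0
    simp only [star_trivial] at hpos
    linarith
  have hN0 : (1 : Matrix (Fin n) (Fin n) ℝ) - Q = 0 := by
    rw [← hN]
    ext i j
    simpa using congrFun (hNcol j) i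
  exact (sub_eq_zero.mp hN0).symm
end

section
/- Let P ∈ ℝ^{n×n} be symmetric and Q₁, Q₂ ∈ SO(n). Then ‖sk(Q₁ᵀ P Q₂)‖_F ≤ ‖P‖_F · ‖Q₁ − Q₂‖_F, where sk(X) = (X − Xᵀ)/2 and ‖·‖_F is the Frobenius norm. -/
open Matrix

/-- Frobenius norm: ‖M‖_F = √tr(MᵀM). -/
noncomputable def frobNorm {n : ℕ} (M : Matrix (Fin n) (Fin n) ℝ) : ℝ :=
  Real.sqrt (Mᵀ * M).trace

attribute [local instance] Matrix.frobeniusNormedAddCommGroup Matrix.frobeniusNormedRing Matrix.frobeniusNormedSpace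

lemma frobNorm_eq_norm {n : ℕ} (M : Matrix (Fin n) (Fin n) ℝ) : frobNorm M = ‖M‖ := by
  rw [frobNorm, Matrix.frobenius_norm_def, Real.sqrt_eq_rpow]
  congr 1
  rw [Matrix.trace]
  simp only [Matrix.diag_apply, Matrix.mul_apply, Matrix.transpose_apply]
  rw [Finset.sum_comm]
  congr 1; ext i; congr 1; ext j
  rw [Real.norm_eq_abs, Real.rpow_two, sq_abs, sq]

lemma frobNorm_mul_left {n : ℕ} (Q A : Matrix (Fin n) (Fin n) ℝ) (hQ : Qᵀ * Q = 1) :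
    frobNorm (Q * A) = frobNorm A := by
  unfold frobNorm
  congr 1
  rw [Matrix.transpose_mul]
  calc (Aᵀ * Qᵀ * (Q * A)).trace = (Aᵀ * (Qᵀ * Q) * A).trace := by
        simp [Matrix.mul_assoc]
    _ = (Aᵀ * A).trace := by rw [hQ, Matrix.mul_one]

lemma frobNorm_mul_right {n : ℕ} (A Q : Matrix (Fin n) (Fin n) ℝ) (hQ : Qᵀ * Q = 1) :
    frobNorm (A * Q) = frobNorm A := by
  have hQ' : Q * Qᵀ = 1 := mul_eq_one_comm.mp hQ
  unfold frobNorm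
  congr 1
  rw [Matrix.transpose_mul]
  calc (Qᵀ * Aᵀ * (A * Q)).trace = (Qᵀ * (Aᵀ * A * Q)).trace := by
        simp [Matrix.mul_assoc]
    _ = (Aᵀ * A * Q * Qᵀ).trace := by rw [Matrix.trace_mul_comm, Matrix.mul_assoc]
    _ = (Aᵀ * A).trace := by rw [Matrix.mul_assoc, hQ', Matrix.mul_one]

theorem stmt7 {n : ℕ} (P : Matrix (Fin n) (Fin n) ℝ) (hP : P.IsSymm)
    (Q₁ Q₂ : Matrix (Fin n) (Fin n) ℝ)
    (hQ₁ : Q₁ᵀ * Q₁ = 1) (hd₁ : Q₁.det = 1)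
    (hQ₂ : Q₂ᵀ * Q₂ = 1) (hd₂ : Q₂.det = 1) :
    frobNorm (skewPart (Q₁ᵀ * P * Q₂)) ≤ frobNorm P * frobNorm (Q₁ - Q₂) := by
  have hQ₁' : Q₁ * Q₁ᵀ = 1 := mul_eq_one_comm.mp hQ₁
  have hQ₁t : Q₁ᵀᵀ * Q₁ᵀ = 1 := by rw [Matrix.transpose_transpose]; exact hQ₁'
  have hkey : skewPart (Q₁ᵀ * P * Q₂)
      = (1 / 2 : ℝ) • (Q₁ᵀ * P * (Q₂ - Q₁) + (Q₁ - Q₂)ᵀ * P * Q₁) := by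
    unfold skewPart
    congr 1
    have hPt : Pᵀ = P := hP
    simp only [Matrix.transpose_mul, Matrix.transpose_transpose, hPt, Matrix.transpose_sub,
      Matrix.mul_sub, Matrix.sub_mul]
    noncomm_ring
  rw [hkey, frobNorm_eq_norm, frobNorm_eq_norm, frobNorm_eq_norm]
  rw [norm_smul]
  have h1 : ‖Q₁ᵀ * P * (Q₂ - Q₁)‖ ≤ ‖P‖ * ‖Q₁ - Q₂‖ := by
    rw [← frobNorm_eq_norm, Matrix.mul_assoc, frobNorm_mul_left _ _ hQ₁t, frobNorm_eq_norm]
    calc ‖P * (Q₂ - Q₁)‖ ≤ ‖P‖ * ‖Q₂ - Q₁‖ := norm_mul_le _ _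
      _ = ‖P‖ * ‖Q₁ - Q₂‖ := by rw [← norm_neg (Q₂ - Q₁), neg_sub]
  have h2 : ‖(Q₁ - Q₂)ᵀ * P * Q₁‖ ≤ ‖P‖ * ‖Q₁ - Q₂‖ := by
    rw [← frobNorm_eq_norm, frobNorm_mul_right _ _ hQ₁, frobNorm_eq_norm]
    calc ‖(Q₁ - Q₂)ᵀ * P‖ ≤ ‖(Q₁ - Q₂)ᵀ‖ * ‖P‖ := norm_mul_le _ _
      _ = ‖P‖ * ‖Q₁ - Q₂‖ := by
          rw [mul_comm]; congr 1
          rw [← frobNorm_eq_norm, ← frobNorm_eq_norm (Q₁ - Q₂)]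
          unfold frobNorm
          rw [Matrix.transpose_transpose, Matrix.trace_mul_comm]
  have h3 := norm_add_le (Q₁ᵀ * P * (Q₂ - Q₁)) ((Q₁ - Q₂)ᵀ * P * Q₁)
  have h12 : ‖(1/2 : ℝ)‖ = 1/2 := by rw [Real.norm_eq_abs]; norm_num
  rw [h12]
  linarith
end

section
/- Let y₁₂, y₁₃, y₂₃ ∈ ℝ³ be unit vectors such that each pair among them is linearly independent but the triple spans only a 2-dimensional subspace (i.e. rank(y₁₂, y₁₃, y₂₃) = 2). Suppose R₂, R₃ ∈ SO(3) satisfy R₂ y₁₂ = y₁₂, R₃ y₁₃ = y₁₃, and R₃ R₂ᵀ y₂₃ = y₂₃. Then R₂ = R₃ = I₃. -/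
open Matrix


lemma rowsMul (R : Matrix (Fin 3) (Fin 3) ℝ) (a b c : Fin 3 → ℝ) :
    Matrix.of ![a, b, c] * Rᵀ = Matrix.of ![R *ᵥ a, R *ᵥ b, R *ᵥ c] := by
  ext i j
  fin_cases i <;>
    simp [Matrix.mul_apply, Matrix.mulVec, dotProduct, mul_comm]

lemma cross_mulVec (R : Matrix (Fin 3) (Fin 3) ℝ) (hR : Rᵀ * R = 1) (hd : R.det = 1)
    (u v : Fin 3 → ℝ) : R *ᵥ (u ⨯₃ v) = (R *ᵥ u) ⨯₃ (R *ᵥ v) := by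
  have hR' : R * Rᵀ = 1 := mul_eq_one_comm.mp hR
  have key : ∀ w : Fin 3 → ℝ, w ⬝ᵥ (R *ᵥ (u ⨯₃ v)) = w ⬝ᵥ ((R *ᵥ u) ⨯₃ (R *ᵥ v)) := by
    intro w
    set w' := Rᵀ *ᵥ w with hw'
    have hw : R *ᵥ w' = w := by
      rw [hw', Matrix.mulVec_mulVec, hR', Matrix.one_mulVec]
    calc w ⬝ᵥ (R *ᵥ (u ⨯₃ v)) = w' ⬝ᵥ (u ⨯₃ v) := by
          rw [Matrix.dotProduct_mulVec, hw', Matrix.mulVec_transpose]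
      _ = Matrix.det (Matrix.of ![w', u, v]) := triple_product_eq_det _ _ _
      _ = Matrix.det (Matrix.of ![w', u, v] * Rᵀ) := by
          rw [Matrix.det_mul, Matrix.det_transpose, hd, mul_one]
      _ = Matrix.det (Matrix.of ![R *ᵥ w', R *ᵥ u, R *ᵥ v]) := by rw [rowsMul]
      _ = Matrix.det (Matrix.of ![w, R *ᵥ u, R *ᵥ v]) := by rw [hw]
      _ = w ⬝ᵥ ((R *ᵥ u) ⨯₃ (R *ᵥ v)) := (triple_product_eq_det _ _ _).symm
  set d := R *ᵥ (u ⨯₃ v) - (R *ᵥ u) ⨯₃ (R *ᵥ v) with hdd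
  have hzero : d ⬝ᵥ d = 0 := by
    have h := key d
    simp only [hdd, dotProduct_sub] at h ⊢
    linarith
  exact sub_eq_zero.mp ((dotProduct_self_eq_zero (v := d)).mp hzero)

lemma fixTwo (R : Matrix (Fin 3) (Fin 3) ℝ) (hR : Rᵀ * R = 1) (hd : R.det = 1)
    (u v : Fin 3 → ℝ) (hli : LinearIndependent ℝ ![u, v])
    (hu : R *ᵥ u = u) (hv : R *ᵥ v = v) : R = 1 := by
  set n := u ⨯₃ v with hn
  have hn0 : n ≠ 0 := crossProduct_ne_zero_iff_linearIndependent.mpr hli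
  have hRn : R *ᵥ n = n := by rw [hn, cross_mulVec R hR hd, hu, hv]
  have hM : Matrix.of ![u, v, n] * Rᵀ = Matrix.of ![u, v, n] := by
    rw [rowsMul, hu, hv, hRn]
  have hdet : Matrix.det (Matrix.of ![u, v, n]) ≠ 0 := by
    have h1 : u ⬝ᵥ (v ⨯₃ n) = n ⬝ᵥ (u ⨯₃ v) := by
      rw [triple_product_permutation, triple_product_permutation v n u]
    have h2 : Matrix.det (Matrix.of ![u, v, n]) = n ⬝ᵥ n := by
      have h3 := triple_product_eq_det u v n
      rw [h1, ← hn] at h3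
      exact h3.symm
    rw [h2]
    intro h
    exact hn0 ((dotProduct_self_eq_zero).mp h)
  have hMunit : IsUnit (Matrix.of ![u, v, n]) := by
    rw [Matrix.isUnit_iff_isUnit_det]
    exact isUnit_iff_ne_zero.mpr hdet
  have hRT : Rᵀ = 1 := hMunit.mul_left_cancel (by rw [hM, mul_one])
  calc R = Rᵀᵀ := (Matrix.transpose_transpose R).symm
    _ = 1 := by rw [hRT, Matrix.transpose_one]

lemma dot_mulVec_left (M : Matrix (Fin 3) (Fin 3) ℝ) (x y : Fin 3 → ℝ) :
    (M *ᵥ x) ⬝ᵥ y = x ⬝ᵥ (Mᵀ *ᵥ y) := by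
  calc (M *ᵥ x) ⬝ᵥ y = y ⬝ᵥ (M *ᵥ x) := dotProduct_comm _ _
    _ = (y ᵥ* M) ⬝ᵥ x := Matrix.dotProduct_mulVec _ _ _
    _ = (Mᵀ *ᵥ y) ⬝ᵥ x := by rw [Matrix.mulVec_transpose]
    _ = x ⬝ᵥ (Mᵀ *ᵥ y) := dotProduct_comm _ _

lemma fixedOfDot (R : Matrix (Fin 3) (Fin 3) ℝ) (hR : Rᵀ * R = 1)
    (y : Fin 3 → ℝ) (hy : y ⬝ᵥ y = 1) (h : (R *ᵥ y) ⬝ᵥ y = 1) : R *ᵥ y = y := by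
  have h1 : (R *ᵥ y) ⬝ᵥ (R *ᵥ y) = 1 := by
    rw [dot_mulVec_left, Matrix.mulVec_mulVec, hR, Matrix.one_mulVec, hy]
  have h2 : y ⬝ᵥ (R *ᵥ y) = 1 := by rw [dotProduct_comm]; exact h
  set d := R *ᵥ y - y with hdd
  have hzero : d ⬝ᵥ d = 0 := by
    simp only [hdd, dotProduct_sub, sub_dotProduct]
    rw [h1, h2, h, hy]; ring
  exact sub_eq_zero.mp ((dotProduct_self_eq_zero (v := d)).mp hzero)

theorem stmt11 (y₁₂ y₁₃ y₂₃ : Fin 3 → ℝ)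
    (h12 : y₁₂ ⬝ᵥ y₁₂ = 1) (h13 : y₁₃ ⬝ᵥ y₁₃ = 1) (h23 : y₂₃ ⬝ᵥ y₂₃ = 1)
    (hli1 : LinearIndependent ℝ ![y₁₂, y₁₃])
    (hli2 : LinearIndependent ℝ ![y₁₂, y₂₃])
    (hli3 : LinearIndependent ℝ ![y₁₃, y₂₃])
    (hrank : Module.finrank ℝ (Submodule.span ℝ {y₁₂, y₁₃, y₂₃}) = 2)
    (R₂ R₃ : Matrix (Fin 3) (Fin 3) ℝ)
    (hR₂ : R₂ᵀ * R₂ = 1) (hd₂ : R₂.det = 1)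
    (hR₃ : R₃ᵀ * R₃ = 1) (hd₃ : R₃.det = 1)
    (hc1 : R₂ *ᵥ y₁₂ = y₁₂) (hc2 : R₃ *ᵥ y₁₃ = y₁₃)
    (hc3 : (R₃ * R₂ᵀ) *ᵥ y₂₃ = y₂₃) :
    R₂ = 1 ∧ R₃ = 1 := by
  -- y₂₃ lies in the span of y₁₂, y₁₃
  have hle : Submodule.span ℝ {y₁₂, y₁₃} ≤ Submodule.span ℝ {y₁₂, y₁₃, y₂₃} := by
    apply Submodule.span_mono
    intro x hx
    simp only [Set.mem_insert_iff, Set.mem_singleton_iff] at hx ⊢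
    tauto
  have hrange : Set.range ![y₁₂, y₁₃] = {y₁₂, y₁₃} := by
    ext x
    simp [Matrix.range_cons, Matrix.range_empty]
    tauto
  have hfinS : Module.finrank ℝ (Submodule.span ℝ {y₁₂, y₁₃}) = 2 := by
    rw [← hrange, finrank_span_eq_card hli1]
    simp
  have hST : Submodule.span ℝ {y₁₂, y₁₃} = Submodule.span ℝ {y₁₂, y₁₃, y₂₃} :=
    Submodule.eq_of_le_of_finrank_le hle (by rw [hrank, hfinS])
  have hmem : y₂₃ ∈ Submodule.span ℝ ({y₁₂, y₁₃} : Set (Fin 3 → ℝ)) := by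
    rw [hST]
    exact Submodule.subset_span (by simp)
  obtain ⟨a, b, hab⟩ := Submodule.mem_span_pair.mp hmem
  have ha : a ≠ 0 := by
    intro h
    rw [h, zero_smul, zero_add] at hab
    have := (LinearIndependent.pair_iff.mp hli3 b (-1)) (by rw [neg_one_smul, hab]; abel)
    simpa using this.2
  have hb : b ≠ 0 := by
    intro h
    rw [h, zero_smul, add_zero] at hab
    have := (LinearIndependent.pair_iff.mp hli2 a (-1)) (by rw [neg_one_smul, hab]; abel)
    simpa using this.2
  -- R₂ᵀ fixes y₁₂
  have hc1T : R₂ᵀ *ᵥ y₁₂ = y₁₂ := by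
    conv_lhs => rw [← hc1]
    rw [Matrix.mulVec_mulVec, hR₂, Matrix.one_mulVec]
  -- R₂ᵀ y₂₃ = R₃ᵀ y₂₃
  have hc3' : R₂ᵀ *ᵥ y₂₃ = R₃ᵀ *ᵥ y₂₃ := by
    have h := congrArg (fun z => R₃ᵀ *ᵥ z) hc3
    simp only [Matrix.mulVec_mulVec, ← Matrix.mul_assoc, hR₃, Matrix.one_mul] at h
    exact h
  -- key: (R₃ y₁₂) ⬝ y₂₃ = y₁₂ ⬝ y₂₃
  have key1 : (R₃ *ᵥ y₁₂) ⬝ᵥ y₂₃ = y₁₂ ⬝ᵥ y₂₃ := by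
    rw [dot_mulVec_left, ← hc3', ← dot_mulVec_left, hc1]
  -- (R₃ y₁₂) ⬝ y₁₃ = y₁₂ ⬝ y₁₃
  have hd13 : (R₃ *ᵥ y₁₂) ⬝ᵥ y₁₃ = y₁₂ ⬝ᵥ y₁₃ := by
    conv_lhs => rw [← hc2]
    rw [dot_mulVec_left, Matrix.mulVec_mulVec, hR₃, Matrix.one_mulVec]
  -- deduce (R₃ y₁₂) ⬝ y₁₂ = 1
  have hdot : (R₃ *ᵥ y₁₂) ⬝ᵥ y₁₂ = 1 := by
    rw [← hab] at key1
    simp only [dotProduct_add, dotProduct_smul, smul_eq_mul] at key1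
    rw [hd13, h12] at key1
    have : a * ((R₃ *ᵥ y₁₂) ⬝ᵥ y₁₂) = a * 1 := by linarith
    exact mul_left_cancel₀ ha this
  have hfix12 : R₃ *ᵥ y₁₂ = y₁₂ := fixedOfDot R₃ hR₃ y₁₂ h12 hdot
  have hR3 : R₃ = 1 := fixTwo R₃ hR₃ hd₃ y₁₂ y₁₃ hli1 hfix12 hc2
  -- now R₂ᵀ fixes y₂₃ as well
  have hc23 : R₂ᵀ *ᵥ y₂₃ = y₂₃ := by
    rw [hR3] at hc3
    rw [Matrix.one_mul] at hc3
    exact hc3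
  have hR2T : R₂ᵀ = 1 :=
    fixTwo R₂ᵀ (by rw [Matrix.transpose_transpose]; exact mul_eq_one_comm.mp hR₂)
      (by rw [Matrix.det_transpose]; exact hd₂) y₁₂ y₂₃ hli2 hc1T hc23
  have hR2 : R₂ = 1 := by
    calc R₂ = R₂ᵀᵀ := (Matrix.transpose_transpose R₂).symm
      _ = 1 := by rw [hR2T, Matrix.transpose_one]
  exact ⟨hR2, hR3⟩
end

section
/- Let y₁₂, y₁₃, y₂₃ ∈ ℝ³ be unit vectors that are linearly independent (rank 3). Then there exist R₂ ∈ SO(3) with R₂ y₁₂ = y₁₂ and R₂ ≠ I₃, and R₃ ∈ SO(3) with R₃ y₁₃ = y₁₃ and R₃ ≠ I₃, such that R₃ R₂ᵀ y₂₃ = y₂₃. -/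
open Matrix

def K3 (u : Fin 3 → ℝ) : Matrix (Fin 3) (Fin 3) ℝ :=
  !![0, -u 2, u 1; u 2, 0, -u 0; -u 1, u 0, 0]

def rot (c s : ℝ) (u : Fin 3 → ℝ) : Matrix (Fin 3) (Fin 3) ℝ :=
  c • (1 : Matrix (Fin 3) (Fin 3) ℝ) + s • K3 u + (1 - c) • vecMulVec u u

lemma rot_mulVec (c s : ℝ) (u x : Fin 3 → ℝ) :
    rot c s u *ᵥ x = c • x + s • (u ⨯₃ x) + ((1 - c) * (u ⬝ᵥ x)) • u := by
  ext i
  fin_cases i <;>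
    simp [rot, K3, Matrix.mulVec, dotProduct, Fin.sum_univ_three,
      Matrix.vecMulVec_apply, Matrix.one_apply, crossProduct, Matrix.vecHead,
      Matrix.vecTail, Pi.smul_apply, Function.comp] <;> ring

lemma K3_transpose (u : Fin 3 → ℝ) : (K3 u)ᵀ = -K3 u := by
  ext i j
  fin_cases i <;> fin_cases j <;> simp [K3]

lemma rot_transpose (c s : ℝ) (u : Fin 3 → ℝ) : (rot c s u)ᵀ = rot c (-s) u := by
  have h : (vecMulVec u u)ᵀ = vecMulVec u u := by
    ext i j; simp [Matrix.vecMulVec_apply, mul_comm]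
  simp [rot, Matrix.transpose_add, Matrix.transpose_smul, Matrix.transpose_one,
    K3_transpose, h, smul_neg]

lemma rot_orth {u : Fin 3 → ℝ} (hu : u ⬝ᵥ u = 1) {c s : ℝ} (hc : c ^ 2 + s ^ 2 = 1) :
    (rot c s u)ᵀ * rot c s u = 1 := by
  rw [rot_transpose]
  have hu' : u 0 * u 0 + u 1 * u 1 + u 2 * u 2 = 1 := by
    simpa [dotProduct, Fin.sum_univ_three] using hu
  ext i j
  fin_cases i <;> fin_cases j <;>
    simp [rot, K3, Matrix.mul_apply, Fin.sum_univ_three, Matrix.vecMulVec_apply,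
      Matrix.one_apply]
  · linear_combination (s^2 + (1-c)^2 * u 0 * u 0) * hu' + (1 - u 0 * u 0) * hc
  · linear_combination ((1-c)^2 * u 0 * u 1) * hu' + (- (u 0 * u 1)) * hc
  · linear_combination ((1-c)^2 * u 0 * u 2) * hu' + (- (u 0 * u 2)) * hc
  · linear_combination ((1-c)^2 * u 1 * u 0) * hu' + (- (u 1 * u 0)) * hc
  · linear_combination (s^2 + (1-c)^2 * u 1 * u 1) * hu' + (1 - u 1 * u 1) * hc
  · linear_combination ((1-c)^2 * u 1 * u 2) * hu' + (- (u 1 * u 2)) * hc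
  · linear_combination ((1-c)^2 * u 2 * u 0) * hu' + (- (u 2 * u 0)) * hc
  · linear_combination ((1-c)^2 * u 2 * u 1) * hu' + (- (u 2 * u 1)) * hc
  · linear_combination (s^2 + (1-c)^2 * u 2 * u 2) * hu' + (1 - u 2 * u 2) * hc

lemma rot_det {u : Fin 3 → ℝ} (hu : u ⬝ᵥ u = 1) {c s : ℝ} (hc : c ^ 2 + s ^ 2 = 1) :
    (rot c s u).det = 1 := by
  have hu' : u 0 * u 0 + u 1 * u 1 + u 2 * u 2 = 1 := by
    simpa [dotProduct, Fin.sum_univ_three] using hu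
  simp [rot, K3, Matrix.det_fin_three, Matrix.vecMulVec_apply, Matrix.one_apply]
  linear_combination (s^2 * (1 + (u 0^2 + u 1^2 + u 2^2) * (1-c)) + c^2 * (1-c)) * hu' + hc

lemma rot_fix {u : Fin 3 → ℝ} (hu : u ⬝ᵥ u = 1) (c s : ℝ) : rot c s u *ᵥ u = u := by
  rw [rot_mulVec, cross_self, hu]
  ext i
  simp [Pi.add_apply, Pi.smul_apply, smul_eq_mul]
  ring

lemma rot_trace {u : Fin 3 → ℝ} (hu : u ⬝ᵥ u = 1) (c s : ℝ) :
    (rot c s u).trace = 2 * c + 1 := by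
  have hu' : u 0 * u 0 + u 1 * u 1 + u 2 * u 2 = 1 := by
    simpa [dotProduct, Fin.sum_univ_three] using hu
  simp [rot, K3, Matrix.trace, Matrix.diag, Fin.sum_univ_three,
    Matrix.vecMulVec_apply, Matrix.one_apply]
  linear_combination (1 - c) * hu'

lemma rot_ne_one {u : Fin 3 → ℝ} (hu : u ⬝ᵥ u = 1) {c : ℝ} (s : ℝ) (hc : c ≠ 1) :
    rot c s u ≠ 1 := by
  intro h
  have h2 := congrArg Matrix.trace h
  rw [rot_trace hu, Matrix.trace_one] at h2
  simp at h2
  apply hc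
  linarith

lemma dot_lin (q : Fin 3 → ℝ) (α β γ : ℝ) (x y z : Fin 3 → ℝ) :
    q ⬝ᵥ (α • x + β • y + γ • z) = α * (q ⬝ᵥ x) + β * (q ⬝ᵥ y) + γ * (q ⬝ᵥ z) := by
  simp [dotProduct, Fin.sum_univ_three, Pi.add_apply, Pi.smul_apply, smul_eq_mul]
  ring

lemma cross_cross' (u v p : Fin 3 → ℝ) :
    (u ⨯₃ v) ⨯₃ p = (u ⬝ᵥ p) • v - (v ⬝ᵥ p) • u := by
  ext i
  fin_cases i <;>
    simp [crossProduct, dotProduct, Fin.sum_univ_three, Pi.sub_apply,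
      Pi.smul_apply, smul_eq_mul] <;> ring

lemma lagrange3 (n p : Fin 3 → ℝ) :
    n ⨯₃ (n ⨯₃ p) = (n ⬝ᵥ p) • n - (n ⬝ᵥ n) • p := by
  ext i
  fin_cases i <;>
    simp [crossProduct, dotProduct, Fin.sum_univ_three, Pi.sub_apply,
      Pi.smul_apply, smul_eq_mul] <;> ring

lemma parallel_of_cross_eq_zero {n p : Fin 3 → ℝ} (hn : n ⬝ᵥ n ≠ 0)
    (h : n ⨯₃ p = 0) : p = ((n ⬝ᵥ p) / (n ⬝ᵥ n)) • n := by
  have hl := lagrange3 n p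
  rw [h] at hl
  simp only [map_zero] at hl
  ext i
  have h2 := congrFun hl i
  simp only [Pi.sub_apply, Pi.smul_apply, Pi.zero_apply, smul_eq_mul] at h2 ⊢
  rw [div_mul_eq_mul_div, eq_div_iff hn]
  linear_combination h2

lemma unique_on_circle {u v w y : Fin 3 → ℝ} (hn : (u ⨯₃ v) ⬝ᵥ (u ⨯₃ v) ≠ 0)
    (hw : w ⬝ᵥ w = 1) (hy : y ⬝ᵥ y = 1)
    (h1 : u ⬝ᵥ y = u ⬝ᵥ w) (h2 : v ⬝ᵥ y = v ⬝ᵥ w) (hne : y ≠ w) :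
    y = w + (-(2 * ((u ⨯₃ v) ⬝ᵥ w)) / ((u ⨯₃ v) ⬝ᵥ (u ⨯₃ v))) • (u ⨯₃ v) := by
  set n := u ⨯₃ v with hn_def
  have hup : u ⬝ᵥ (y - w) = 0 := by rw [dotProduct_sub, h1, sub_self]
  have hvp : v ⬝ᵥ (y - w) = 0 := by rw [dotProduct_sub, h2, sub_self]
  have hperp : n ⨯₃ (y - w) = 0 := by
    rw [hn_def, cross_cross', hup, hvp]; simp
  have hpar := parallel_of_cross_eq_zero hn hperp
  set t := (n ⬝ᵥ (y - w)) / (n ⬝ᵥ n) with ht_def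
  have ht : t ≠ 0 := by
    intro h0
    apply hne
    have hp0 : y - w = 0 := by rw [hpar, h0, zero_smul]
    exact sub_eq_zero.mp hp0
  have hyw : y = w + t • n := by rw [← hpar]; abel
  have hE : (w + t • n) ⬝ᵥ (w + t • n) = 1 := by rw [← hyw]; exact hy
  have hE2 : t * (2 * (n ⬝ᵥ w) + t * (n ⬝ᵥ n)) = 0 := by
    simp only [add_dotProduct, dotProduct_add, smul_dotProduct, dotProduct_smul,
      smul_eq_mul] at hE
    have hcomm : w ⬝ᵥ n = n ⬝ᵥ w := dotProduct_comm w n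
    linear_combination hE - hw - t * hcomm
  have hE3 : 2 * (n ⬝ᵥ w) + t * (n ⬝ᵥ n) = 0 := by
    rcases mul_eq_zero.mp hE2 with h | h
    · exact absurd h ht
    · exact h
  have htval : t = -(2 * (n ⬝ᵥ w)) / (n ⬝ᵥ n) := by
    rw [eq_div_iff hn]
    linear_combination hE3
  rw [hyw, htval]

lemma choose_cs (A D : ℝ) (hD : D ≠ 0) :
    ∃ c s : ℝ, c ^ 2 + s ^ 2 = 1 ∧ c ≠ 1 ∧ c * A - s * D = A ∧ (s = 0 → c = -1) := by
  have hDsq : 0 < D ^ 2 := lt_of_le_of_ne (sq_nonneg D) (Ne.symm (pow_ne_zero 2 hD))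
  have hS : 0 < A ^ 2 + D ^ 2 := by nlinarith [sq_nonneg A]
  refine ⟨(A ^ 2 - D ^ 2) / (A ^ 2 + D ^ 2), -(2 * A * D) / (A ^ 2 + D ^ 2), ?_, ?_, ?_, ?_⟩
  · field_simp; ring
  · intro h
    rw [div_eq_one_iff_eq hS.ne'] at h
    nlinarith
  · field_simp; ring
  · intro h
    rcases div_eq_zero_iff.mp h with h3 | h3
    · have hAD : A * D = 0 := by linarith
      rcases mul_eq_zero.mp hAD with h4 | h4
      · rw [h4]
        rw [zero_pow (by norm_num), zero_sub, zero_add, neg_div,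
          div_self (pow_ne_zero 2 hD)]
      · exact absurd h4 hD
    · exact absurd h3 hS.ne'

theorem stmt12 (y₁₂ y₁₃ y₂₃ : Fin 3 → ℝ)
    (h12 : y₁₂ ⬝ᵥ y₁₂ = 1) (h13 : y₁₃ ⬝ᵥ y₁₃ = 1) (h23 : y₂₃ ⬝ᵥ y₂₃ = 1)
    (hli : LinearIndependent ℝ ![y₁₂, y₁₃, y₂₃]) :
    ∃ R₂ R₃ : Matrix (Fin 3) (Fin 3) ℝ,
      R₂ᵀ * R₂ = 1 ∧ R₂.det = 1 ∧ R₃ᵀ * R₃ = 1 ∧ R₃.det = 1 ∧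
      R₂ *ᵥ y₁₂ = y₁₂ ∧ R₂ ≠ 1 ∧
      R₃ *ᵥ y₁₃ = y₁₃ ∧ R₃ ≠ 1 ∧
      (R₃ * R₂ᵀ) *ᵥ y₂₃ = y₂₃ := by
  have hdet : Matrix.det ![y₁₂, y₁₃, y₂₃] ≠ 0 := by
    have hM : IsUnit (Matrix.of ![y₁₂, y₁₃, y₂₃]) :=
      Matrix.linearIndependent_rows_iff_isUnit.mp hli
    rw [Matrix.isUnit_iff_isUnit_det] at hM
    exact hM.ne_zero
  have hD3 : y₁₂ ⬝ᵥ (y₁₃ ⨯₃ y₂₃) ≠ 0 := by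
    rw [triple_product_eq_det]; exact hdet
  have hD2 : y₁₃ ⬝ᵥ (y₁₂ ⨯₃ y₂₃) ≠ 0 := by
    rw [triple_product_eq_det]
    have he : Matrix.det ![y₁₃, y₁₂, y₂₃] = -Matrix.det ![y₁₂, y₁₃, y₂₃] := by
      change Matrix.det (Matrix.of ![y₁₃, y₁₂, y₂₃]) = -Matrix.det (Matrix.of ![y₁₂, y₁₃, y₂₃])
      rw [Matrix.det_fin_three, Matrix.det_fin_three]; simp; ring
    rw [he]
    exact neg_ne_zero.mpr hdet
  have hWn : y₂₃ ⬝ᵥ (y₁₂ ⨯₃ y₁₃) ≠ 0 := by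
    rw [triple_product_eq_det]
    have he : Matrix.det ![y₂₃, y₁₂, y₁₃] = Matrix.det ![y₁₂, y₁₃, y₂₃] := by
      change Matrix.det (Matrix.of ![y₂₃, y₁₂, y₁₃]) = Matrix.det (Matrix.of ![y₁₂, y₁₃, y₂₃])
      rw [Matrix.det_fin_three, Matrix.det_fin_three]; simp; ring
    rw [he]; exact hdet
  have hn : (y₁₂ ⨯₃ y₁₃) ⬝ᵥ (y₁₂ ⨯₃ y₁₃) ≠ 0 := by
    intro h0
    apply hWn
    rw [dotProduct_self_eq_zero.mp h0, dotProduct_zero]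
  obtain ⟨c₂, s₂, hcs2, hc2ne, heq2, hdeg2⟩ :=
    choose_cs (y₁₃ ⬝ᵥ y₂₃ - (y₁₂ ⬝ᵥ y₂₃) * (y₁₂ ⬝ᵥ y₁₃)) (y₁₃ ⬝ᵥ (y₁₂ ⨯₃ y₂₃)) hD2
  obtain ⟨c₃, s₃, hcs3, hc3ne, heq3, hdeg3⟩ :=
    choose_cs (y₁₂ ⬝ᵥ y₂₃ - (y₁₂ ⬝ᵥ y₁₃) * (y₁₃ ⬝ᵥ y₂₃)) (y₁₂ ⬝ᵥ (y₁₃ ⨯₃ y₂₃)) hD3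
  set R₂ := rot c₂ s₂ y₁₂ with hR2
  set R₃ := rot c₃ s₃ y₁₃ with hR3
  have horth2 : R₂ᵀ * R₂ = 1 := rot_orth h12 hcs2
  have horth3 : R₃ᵀ * R₃ = 1 := rot_orth h13 hcs3
  refine ⟨R₂, R₃, horth2, rot_det h12 hcs2, horth3, rot_det h13 hcs3,
    rot_fix h12 c₂ s₂, rot_ne_one h12 s₂ hc2ne, rot_fix h13 c₃ s₃,
    rot_ne_one h13 s₃ hc3ne, ?_⟩
  have hzf : R₂ᵀ *ᵥ y₂₃ =
      c₂ • y₂₃ + (-s₂) • (y₁₂ ⨯₃ y₂₃) + ((1 - c₂) * (y₁₂ ⬝ᵥ y₂₃)) • y₁₂ := by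
    rw [hR2, rot_transpose, rot_mulVec]
  have hz'f : R₃ᵀ *ᵥ y₂₃ =
      c₃ • y₂₃ + (-s₃) • (y₁₃ ⨯₃ y₂₃) + ((1 - c₃) * (y₁₃ ⬝ᵥ y₂₃)) • y₁₃ := by
    rw [hR3, rot_transpose, rot_mulVec]
  have hnorm : ∀ (R : Matrix (Fin 3) (Fin 3) ℝ), Rᵀ * R = 1 →
      (Rᵀ *ᵥ y₂₃) ⬝ᵥ (Rᵀ *ᵥ y₂₃) = 1 := by
    intro R hR
    have h1 : R * Rᵀ = 1 := mul_eq_one_comm.mp hR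
    calc (Rᵀ *ᵥ y₂₃) ⬝ᵥ (Rᵀ *ᵥ y₂₃)
        = ((Rᵀ *ᵥ y₂₃) ᵥ* Rᵀ) ⬝ᵥ y₂₃ := Matrix.dotProduct_mulVec _ _ _
      _ = ((y₂₃ ᵥ* R) ᵥ* Rᵀ) ⬝ᵥ y₂₃ := by rw [Matrix.mulVec_transpose]
      _ = (y₂₃ ᵥ* (R * Rᵀ)) ⬝ᵥ y₂₃ := by rw [Matrix.vecMul_vecMul]
      _ = 1 := by rw [h1, Matrix.vecMul_one, h23]
  have hz_norm : (R₂ᵀ *ᵥ y₂₃) ⬝ᵥ (R₂ᵀ *ᵥ y₂₃) = 1 := hnorm R₂ horth2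
  have hz'_norm : (R₃ᵀ *ᵥ y₂₃) ⬝ᵥ (R₃ᵀ *ᵥ y₂₃) = 1 := hnorm R₃ horth3
  have hcomm12 : y₁₃ ⬝ᵥ y₁₂ = y₁₂ ⬝ᵥ y₁₃ := dotProduct_comm _ _
  have hz_u : y₁₂ ⬝ᵥ (R₂ᵀ *ᵥ y₂₃) = y₁₂ ⬝ᵥ y₂₃ := by
    rw [hzf, dot_lin, dot_self_cross, h12]
    ring
  have hz_v : y₁₃ ⬝ᵥ (R₂ᵀ *ᵥ y₂₃) = y₁₃ ⬝ᵥ y₂₃ := by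
    rw [hzf, dot_lin, hcomm12]
    linear_combination heq2
  have hz'_v : y₁₃ ⬝ᵥ (R₃ᵀ *ᵥ y₂₃) = y₁₃ ⬝ᵥ y₂₃ := by
    rw [hz'f, dot_lin, dot_self_cross, h13]
    ring
  have hz'_u : y₁₂ ⬝ᵥ (R₃ᵀ *ᵥ y₂₃) = y₁₂ ⬝ᵥ y₂₃ := by
    rw [hz'f, dot_lin]
    linear_combination heq3
  have hz_ne : R₂ᵀ *ᵥ y₂₃ ≠ y₂₃ := by
    intro h
    have h5 : (y₁₂ ⨯₃ y₂₃) ⬝ᵥ (R₂ᵀ *ᵥ y₂₃) = (y₁₂ ⨯₃ y₂₃) ⬝ᵥ y₂₃ := by rw [h]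
    rw [hzf, dot_lin] at h5
    have hmw : (y₁₂ ⨯₃ y₂₃) ⬝ᵥ y₂₃ = 0 := by
      rw [dotProduct_comm]; exact dot_cross_self _ _
    have hmu : (y₁₂ ⨯₃ y₂₃) ⬝ᵥ y₁₂ = 0 := by
      rw [dotProduct_comm]; exact dot_self_cross _ _
    rw [hmw, hmu] at h5
    have hm0 : y₁₂ ⨯₃ y₂₃ ≠ 0 := by
      intro hh; apply hD2; rw [hh, dotProduct_zero]
    have hmm : (y₁₂ ⨯₃ y₂₃) ⬝ᵥ (y₁₂ ⨯₃ y₂₃) ≠ 0 :=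
      fun hh => hm0 (dotProduct_self_eq_zero.mp hh)
    have hs20 : s₂ = 0 := by
      rcases mul_eq_zero.mp (show s₂ * ((y₁₂ ⨯₃ y₂₃) ⬝ᵥ (y₁₂ ⨯₃ y₂₃)) = 0 by
        linear_combination -h5) with hh | hh
      · exact hh
      · exact absurd hh hmm
    have hc2m1 : c₂ = -1 := hdeg2 hs20
    rw [hzf, hc2m1, hs20] at h
    have hw : y₂₃ = (y₁₂ ⬝ᵥ y₂₃) • y₁₂ := by
      ext i
      have h6 := congrFun h i
      simp only [Pi.add_apply, Pi.smul_apply, smul_eq_mul, neg_zero, zero_mul,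
        neg_mul, one_mul, Pi.neg_apply] at h6 ⊢
      linarith [h6]
    apply hD2
    rw [show y₁₂ ⨯₃ y₂₃ = 0 by
      rw [hw, LinearMap.map_smul, cross_self, smul_zero], dotProduct_zero]
  have hz'_ne : R₃ᵀ *ᵥ y₂₃ ≠ y₂₃ := by
    intro h
    have h5 : (y₁₃ ⨯₃ y₂₃) ⬝ᵥ (R₃ᵀ *ᵥ y₂₃) = (y₁₃ ⨯₃ y₂₃) ⬝ᵥ y₂₃ := by rw [h]
    rw [hz'f, dot_lin] at h5
    have hmw : (y₁₃ ⨯₃ y₂₃) ⬝ᵥ y₂₃ = 0 := by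
      rw [dotProduct_comm]; exact dot_cross_self _ _
    have hmu : (y₁₃ ⨯₃ y₂₃) ⬝ᵥ y₁₃ = 0 := by
      rw [dotProduct_comm]; exact dot_self_cross _ _
    rw [hmw, hmu] at h5
    have hm0 : y₁₃ ⨯₃ y₂₃ ≠ 0 := by
      intro hh; apply hD3; rw [hh, dotProduct_zero]
    have hmm : (y₁₃ ⨯₃ y₂₃) ⬝ᵥ (y₁₃ ⨯₃ y₂₃) ≠ 0 :=
      fun hh => hm0 (dotProduct_self_eq_zero.mp hh)
    have hs30 : s₃ = 0 := by
      rcases mul_eq_zero.mp (show s₃ * ((y₁₃ ⨯₃ y₂₃) ⬝ᵥ (y₁₃ ⨯₃ y₂₃)) = 0 by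
        linear_combination -h5) with hh | hh
      · exact hh
      · exact absurd hh hmm
    have hc3m1 : c₃ = -1 := hdeg3 hs30
    rw [hz'f, hc3m1, hs30] at h
    have hw : y₂₃ = (y₁₃ ⬝ᵥ y₂₃) • y₁₃ := by
      ext i
      have h6 := congrFun h i
      simp only [Pi.add_apply, Pi.smul_apply, smul_eq_mul, neg_zero, zero_mul,
        neg_mul, one_mul, Pi.neg_apply] at h6 ⊢
      linarith [h6]
    apply hD3
    rw [show y₁₃ ⨯₃ y₂₃ = 0 by
      rw [hw, LinearMap.map_smul, cross_self, smul_zero], dotProduct_zero]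
  have hzz' : R₂ᵀ *ᵥ y₂₃ = R₃ᵀ *ᵥ y₂₃ := by
    rw [unique_on_circle hn h23 hz_norm hz_u hz_v hz_ne,
      unique_on_circle hn h23 hz'_norm hz'_u hz'_v hz'_ne]
  rw [← Matrix.mulVec_mulVec, hzz', Matrix.mulVec_mulVec,
    mul_eq_one_comm.mp horth3, Matrix.one_mulVec]
end

section
/- Let G be an undirected graph with k vertices and edge set E, with incidence matrix B ∈ ℝ^{k×|E|}, and for each edge e = (i,j) let M_{ij} = y_{ij} y_{ij}ᵀ for unit vectors y_{ij} ∈ ℝ^n. Define the extended Laplacian L^g ∈ ℝ^{kn×kn} by L^g_{ij} = −a_{ij} M_{ij} for i ≠ j and L^g_{ii} = Σ_j a_{ij} M_{ij}, where a_{ij} is the adjacency matrix. Then L^g = (B ⊗ Iₙ) W (B ⊗ Iₙ)ᵀ, where W is the block-diagonal matrix with block M_{ij} for edge (i,j). Consequently L^g is symmetric positive semidefinite and rank(L^g) ≤ min(|E|, n·rank(L)), where L = B Bᵀ is the ordinary graph Laplacian. -/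
open Matrix Kronecker

/-- Incidence matrix of a graph given by a list of edges `e j = (i, i')` with `i < i'`:
column `j` has entry `-1` in row `(e j).1`, `+1` in row `(e j).2`, and `0` elsewhere. -/
noncomputable def incB {k m : ℕ} (e : Fin m → Fin k × Fin k) : Matrix (Fin k) (Fin m) ℝ :=
  fun i j => if (e j).1 = i then -1 else if (e j).2 = i then 1 else 0

/-- Block-diagonal matrix with block `y_e y_eᵀ` for each edge `e`. -/
noncomputable def Wmat {m n : ℕ} (y : Fin m → Fin n → ℝ) :
    Matrix (Fin m × Fin n) (Fin m × Fin n) ℝ :=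
  fun p q => if p.1 = q.1 then y p.1 p.2 * y p.1 q.2 else 0

/-- The n×n block `a_{i i'} M_{i i'} = a_{i i'} y_{i i'} y_{i i'}ᵀ` of the extended Laplacian. -/
noncomputable def Mblock {k m n : ℕ} (e : Fin m → Fin k × Fin k) (y : Fin m → Fin n → ℝ)
    (i i' : Fin k) : Matrix (Fin n) (Fin n) ℝ :=
  ∑ j, if e j = (i, i') ∨ e j = (i', i) then vecMulVec (y j) (y j) else 0

/-- The extended Laplacian L^g: off-diagonal blocks `-a_{ij} M_{ij}`,
diagonal blocks `Σ_j a_{ij} M_{ij}`. -/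
noncomputable def Lg {k m n : ℕ} (e : Fin m → Fin k × Fin k) (y : Fin m → Fin n → ℝ) :
    Matrix (Fin k × Fin n) (Fin k × Fin n) ℝ :=
  fun p q => if p.1 = q.1 then (∑ i'', Mblock e y p.1 i'') p.2 q.2
             else -(Mblock e y p.1 q.1 p.2 q.2)

/-! ### Auxiliary lemmas -/

lemma matRank_add_le {p q : Type*} [Fintype p] [Fintype q] (A B : Matrix p q ℝ) :
    (A + B).rank ≤ A.rank + B.rank := by
  rw [Matrix.rank, Matrix.rank, Matrix.rank, Matrix.mulVecLin_add]
  have h : LinearMap.range (A.mulVecLin + B.mulVecLin) ≤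
      LinearMap.range A.mulVecLin ⊔ LinearMap.range B.mulVecLin := by
    rintro x ⟨v, rfl⟩
    exact Submodule.add_mem_sup ⟨v, rfl⟩ ⟨v, rfl⟩
  exact (Submodule.finrank_mono h).trans
    (Submodule.finrank_add_le_finrank_add_finrank _ _)

lemma matRank_sum_le {p q ι : Type*} [Fintype p] [Fintype q] (s : Finset ι)
    (f : ι → Matrix p q ℝ) : (∑ i ∈ s, f i).rank ≤ ∑ i ∈ s, (f i).rank := by
  classical
  induction s using Finset.induction_on with
  | empty => simp
  | insert _ _ h ih =>
    rw [Finset.sum_insert h, Finset.sum_insert h]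
    exact (matRank_add_le _ _).trans (add_le_add_right ih _)

lemma entry_XBY {k m n : ℕ} (B : Matrix (Fin k) (Fin m) ℝ) (s : Fin n)
    (i : Fin k) (t : Fin n) (j : Fin m) (u : Fin n) :
    ((Matrix.of fun (p : Fin k × Fin n) (i : Fin k) =>
            if p.1 = i ∧ p.2 = s then (1:ℝ) else 0)
        * B *
        (Matrix.of fun (j : Fin m) (q : Fin m × Fin n) =>
            if q.1 = j ∧ q.2 = s then (1:ℝ) else 0)) (i, t) (j, u)
      = if t = s ∧ u = s then B i j else 0 := by
  simp only [mul_apply, of_apply, ite_and, ite_mul, mul_ite, one_mul, mul_one, zero_mul,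
    mul_zero, Finset.sum_ite_irrel, Finset.sum_const_zero, Finset.sum_ite_eq,
    Finset.sum_ite_eq', Finset.mem_univ, if_true]
  by_cases h1 : t = s <;> by_cases h2 : u = s <;> simp [h1, h2]

lemma kron_one_eq_sum {k m n : ℕ} (B : Matrix (Fin k) (Fin m) ℝ) :
    (B ⊗ₖ (1 : Matrix (Fin n) (Fin n) ℝ)) =
      ∑ s : Fin n,
        (Matrix.of fun (p : Fin k × Fin n) (i : Fin k) =>
            if p.1 = i ∧ p.2 = s then (1:ℝ) else 0)
        * B *
        (Matrix.of fun (j : Fin m) (q : Fin m × Fin n) =>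
            if q.1 = j ∧ q.2 = s then (1:ℝ) else 0) := by
  ext ⟨i, t⟩ ⟨j, u⟩
  rw [Matrix.sum_apply]
  simp only [entry_XBY]
  by_cases h : t = u
  · subst h
    simp [kroneckerMap_apply, Finset.sum_ite_eq', one_apply]
  · simp [kroneckerMap_apply, one_apply, h, fun s => show ¬(t = s ∧ u = s) from
      fun ⟨a, b⟩ => h (a.trans b.symm)]

lemma rank_kron_one_le {k m n : ℕ} (B : Matrix (Fin k) (Fin m) ℝ) :
    (B ⊗ₖ (1 : Matrix (Fin n) (Fin n) ℝ)).rank ≤ n * B.rank := by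
  rw [kron_one_eq_sum]
  refine (matRank_sum_le _ _).trans ?_
  have h : ∀ s : Fin n, ((Matrix.of fun (p : Fin k × Fin n) (i : Fin k) =>
            if p.1 = i ∧ p.2 = s then (1:ℝ) else 0)
        * B *
        (Matrix.of fun (j : Fin m) (q : Fin m × Fin n) =>
            if q.1 = j ∧ q.2 = s then (1:ℝ) else 0)).rank ≤ B.rank := fun s =>
    (Matrix.rank_mul_le_left _ _).trans (Matrix.rank_mul_le_right _ _)
  calc ∑ s : Fin n, _ ≤ ∑ _s : Fin n, B.rank := Finset.sum_le_sum fun s _ => h s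
    _ = n * B.rank := by simp [Finset.sum_const]

noncomputable def Cmat {k m n : ℕ} (e : Fin m → Fin k × Fin k) (y : Fin m → Fin n → ℝ) :
    Matrix (Fin k × Fin n) (Fin m) ℝ :=
  Matrix.of fun p j => incB e p.1 j * y j p.2

lemma step1 {k m n : ℕ} (e : Fin m → Fin k × Fin k) (y : Fin m → Fin n → ℝ) :
    (incB e ⊗ₖ (1 : Matrix (Fin n) (Fin n) ℝ)) * Wmat y =
      Matrix.of fun (p : Fin k × Fin n) (q : Fin m × Fin n) => Cmat e y p q.1 * y q.1 q.2 := by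
  ext ⟨i, a⟩ ⟨j, t⟩
  rw [mul_apply, Fintype.sum_prod_type]
  simp only [kroneckerMap_apply, one_apply, Wmat, Cmat, of_apply, ite_mul, mul_ite,
    zero_mul, mul_zero, one_mul, Finset.sum_ite_irrel, Finset.sum_const_zero,
    Finset.sum_ite_eq, Finset.sum_ite_eq', Finset.mem_univ, if_true]
  ring

lemma step2 {k m n : ℕ} (e : Fin m → Fin k × Fin k) (y : Fin m → Fin n → ℝ) :
    (incB e ⊗ₖ (1 : Matrix (Fin n) (Fin n) ℝ)) * Wmat y *
        ((incB e ⊗ₖ (1 : Matrix (Fin n) (Fin n) ℝ))ᵀ) = Cmat e y * (Cmat e y)ᵀ := by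
  rw [step1]
  ext ⟨i, a⟩ ⟨i', b⟩
  rw [mul_apply, mul_apply, Fintype.sum_prod_type]
  simp only [of_apply, transpose_apply, kroneckerMap_apply, one_apply, Cmat, mul_ite,
    mul_zero, mul_one, Finset.sum_ite_eq, Finset.sum_ite_eq', Finset.mem_univ, if_true]
  apply Finset.sum_congr rfl
  intro j _
  ring

lemma offd_j {k m : ℕ} (e : Fin m → Fin k × Fin k) (j : Fin m) {i i' : Fin k} (hne : i ≠ i')
    (c : ℝ) :
    -(if e j = (i, i') ∨ e j = (i', i) then c else 0) = incB e i j * incB e i' j * c := by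
  unfold incB
  by_cases h1 : (e j).1 = i <;> by_cases h2 : (e j).2 = i <;>
    by_cases h3 : (e j).1 = i' <;> by_cases h4 : (e j).2 = i' <;>
    simp_all [Prod.ext_iff]

lemma diag_j {k m : ℕ} (e : Fin m → Fin k × Fin k) (hlt : ∀ j, (e j).1 < (e j).2)
    (j : Fin m) (i : Fin k) (c : ℝ) :
    (∑ i'' : Fin k, if e j = (i, i'') ∨ e j = (i'', i) then c else 0)
      = incB e i j * incB e i j * c := by
  have hne : (e j).1 ≠ (e j).2 := (hlt j).ne
  unfold incB
  by_cases h1 : (e j).1 = i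
  · have h2 : (e j).2 ≠ i := fun h => hne (h1.trans h.symm)
    have hcond : ∀ i'' : Fin k, (e j = (i, i'') ∨ e j = (i'', i)) ↔ i'' = (e j).2 := by
      intro i''
      simp [Prod.ext_iff, h1, h2, eq_comm]
    simp [hcond, h1]
  · by_cases h2 : (e j).2 = i
    · have hcond : ∀ i'' : Fin k, (e j = (i, i'') ∨ e j = (i'', i)) ↔ i'' = (e j).1 := by
        intro i''
        simp [Prod.ext_iff, h1, h2, eq_comm]
      simp [hcond, h1, h2]
    · have hcond : ∀ i'' : Fin k, ¬(e j = (i, i'') ∨ e j = (i'', i)) := by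
        intro i''
        simp [Prod.ext_iff, h1, h2]
      simp [hcond, h1, h2]

lemma Mblock_apply {k m n : ℕ} (e : Fin m → Fin k × Fin k) (y : Fin m → Fin n → ℝ)
    (i i' : Fin k) (a b : Fin n) :
    Mblock e y i i' a b = ∑ j, if e j = (i, i') ∨ e j = (i', i) then y j a * y j b else 0 := by
  unfold Mblock
  rw [Matrix.sum_apply]
  refine Finset.sum_congr rfl fun j _ => ?_
  split_ifs <;> simp [vecMulVec_apply]

lemma Lg_eq {k m n : ℕ} (e : Fin m → Fin k × Fin k) (hlt : ∀ j, (e j).1 < (e j).2)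
    (y : Fin m → Fin n → ℝ) : Lg e y = Cmat e y * (Cmat e y)ᵀ := by
  ext ⟨i, a⟩ ⟨i', b⟩
  rw [mul_apply]
  simp only [Cmat, of_apply, transpose_apply]
  unfold Lg
  dsimp only
  split_ifs with h
  · subst h
    rw [Matrix.sum_apply]
    simp only [Mblock_apply]
    rw [Finset.sum_comm]
    refine Finset.sum_congr rfl fun j _ => ?_
    rw [diag_j e hlt j i (y j a * y j b)]
    ring
  · rw [Mblock_apply, ← Finset.sum_neg_distrib]
    refine Finset.sum_congr rfl fun j _ => ?_
    rw [offd_j e j h (y j a * y j b)]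
    ring

theorem stmt16 {k m n : ℕ} (e : Fin m → Fin k × Fin k)
    (hlt : ∀ j, (e j).1 < (e j).2) (hinj : Function.Injective e)
    (y : Fin m → Fin n → ℝ) (hy : ∀ j, y j ⬝ᵥ y j = 1) :
    Lg e y = (incB e ⊗ₖ (1 : Matrix (Fin n) (Fin n) ℝ)) * Wmat y *
        ((incB e ⊗ₖ (1 : Matrix (Fin n) (Fin n) ℝ))ᵀ) ∧
    (Lg e y).IsSymm ∧ (Lg e y).PosSemidef ∧
    (Lg e y).rank ≤ min m (n * (incB e * (incB e)ᵀ).rank) := by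
  have hCC : Lg e y = Cmat e y * (Cmat e y)ᵀ := Lg_eq e hlt y
  refine ⟨hCC.trans (step2 e y).symm, ?_, ?_, le_min ?_ ?_⟩
  · rw [hCC, Matrix.IsSymm, transpose_mul, transpose_transpose]
  · rw [hCC, ← Matrix.conjTranspose_eq_transpose_of_trivial]
    exact Matrix.posSemidef_self_mul_conjTranspose _
  · rw [hCC]
    exact (Matrix.rank_mul_le_left _ _).trans
      ((Matrix.rank_le_card_width _).trans (by simp))
  · rw [hCC.trans (step2 e y).symm, Matrix.mul_assoc]
    refine (Matrix.rank_mul_le_left _ _).trans ?_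
    refine (rank_kron_one_le _).trans ?_
    rw [Matrix.rank_self_mul_transpose]
end

section
/- With the extended Laplacian L^g ∈ ℝ^{kn×kn} as above (built from an undirected graph on k vertices and unit reference vectors y_{ij} per edge), the output synchronization set C_o = {(x₁,…,x_k) ∈ (ℝ^n)^k : y_{ij}ᵀ xᵢ = y_{ij}ᵀ x_j for all edges (i,j)} equals the kernel of L^g (identifying (x₁,…,x_k) with the stacked vector in ℝ^{kn}), and C_o equals the state synchronization set C_s = {(x,…,x) : x ∈ ℝ^n} if and only if rank(L^g) = n(k−1). -/
open Matrix

/-- The incidence-type factor `B` with `L = Bᵀ B`. -/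
noncomputable def Bmat {k m n : ℕ} (e : Fin m → Fin k × Fin k) (y : Fin m → Fin n → ℝ) :
    Matrix (Fin m) (Fin k × Fin n) ℝ :=
  fun j p => ((if p.1 = (e j).1 then (1:ℝ) else 0) - (if p.1 = (e j).2 then 1 else 0)) * y j p.2

lemma Lg_eq_BtB {k m n : ℕ} (e : Fin m → Fin k × Fin k)
    (hlt : ∀ j, (e j).1 < (e j).2) (y : Fin m → Fin n → ℝ) :
    Lg e y = (Bmat e y)ᵀ * (Bmat e y) := by
  funext p
  ext q
  have hne : ∀ j, (e j).1 ≠ (e j).2 := fun j => (hlt j).ne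
  simp only [Lg, Mblock, Bmat, Matrix.mul_apply, Matrix.transpose_apply]
  split_ifs with h
  · -- diagonal block
    simp only [Matrix.sum_apply, Matrix.vecMulVec_apply]
    rw [Finset.sum_comm]
    refine Finset.sum_congr rfl fun j _ => ?_
    have hab := hne j
    have key : ∀ i'' : Fin k, (if e j = (p.1, i'') ∨ e j = (i'', p.1)
        then vecMulVec (y j) (y j) else (0 : Matrix (Fin n) (Fin n) ℝ)) p.2 q.2
        = (if i'' = (e j).2 then (if (e j).1 = p.1 then y j p.2 * y j q.2 else 0) else 0)
          + (if i'' = (e j).1 then (if (e j).2 = p.1 then y j p.2 * y j q.2 else 0) else 0) := by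
      intro i''
      by_cases h1 : (e j).1 = p.1 <;> by_cases h2 : (e j).2 = p.1 <;>
        by_cases h3 : i'' = (e j).2 <;> by_cases h4 : i'' = (e j).1 <;>
        simp_all [Prod.ext_iff, vecMulVec_apply, eq_comm] <;>
        simp_all
    rw [Finset.sum_congr rfl (fun i'' _ => key i'')]
    rw [Finset.sum_add_distrib]
    rw [Finset.sum_ite_eq' Finset.univ ((e j).2), Finset.sum_ite_eq' Finset.univ ((e j).1)]
    simp only [Finset.mem_univ, if_true]
    by_cases h1 : (e j).1 = p.1 <;> by_cases h2 : (e j).2 = p.1 <;>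
      simp_all [← h, eq_comm] <;> ring
  · -- off-diagonal block
    simp only [Matrix.sum_apply, Matrix.vecMulVec_apply]
    rw [← Finset.sum_neg_distrib]
    refine Finset.sum_congr rfl fun j _ => ?_
    have := hne j
    rcases hej : e j with ⟨a, b⟩
    rw [hej] at this
    simp only [Prod.mk.injEq]
    by_cases h1 : p.1 = a <;> by_cases h2 : p.1 = b <;> by_cases h3 : q.1 = a <;>
      by_cases h4 : q.1 = b <;>
      simp_all [vecMulVec_apply, eq_comm] <;> ring

lemma Bmat_mulVec {k m n : ℕ} (e : Fin m → Fin k × Fin k)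
    (hlt : ∀ j, (e j).1 < (e j).2) (y : Fin m → Fin n → ℝ) (x : Fin k → Fin n → ℝ) (j : Fin m) :
    ((Bmat e y) *ᵥ (fun p => x p.1 p.2)) j = y j ⬝ᵥ x (e j).1 - y j ⬝ᵥ x (e j).2 := by
  have key : ∀ c : Fin k,
      ∑ p : Fin k × Fin n, (if p.1 = c then y j p.2 * x p.1 p.2 else 0) = y j ⬝ᵥ x c := by
    intro c
    rw [Fintype.sum_prod_type]
    rw [Finset.sum_eq_single c]
    · simp [dotProduct]
    · intro i _ hi; simp [hi]
    · simp
  simp only [Matrix.mulVec, dotProduct, Bmat, sub_mul, ite_mul, one_mul, zero_mul]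
  rw [Finset.sum_sub_distrib, key, key]
  simp [dotProduct]

/-- part 1 as a lemma -/
lemma part1 {k m n : ℕ} (e : Fin m → Fin k × Fin k)
    (hlt : ∀ j, (e j).1 < (e j).2) (y : Fin m → Fin n → ℝ) (x : Fin k → Fin n → ℝ) :
    (Lg e y) *ᵥ (fun p => x p.1 p.2) = 0 ↔
      ∀ j, y j ⬝ᵥ x (e j).1 = y j ⬝ᵥ x (e j).2 := by
  set v : Fin k × Fin n → ℝ := fun p => x p.1 p.2 with hv
  have hB : (Bmat e y) *ᵥ v = 0 ↔ ∀ j, y j ⬝ᵥ x (e j).1 = y j ⬝ᵥ x (e j).2 := by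
    constructor
    · intro h0 j
      have := congrFun h0 j
      rw [Bmat_mulVec e hlt y x j] at this
      simpa [sub_eq_zero] using this
    · intro hs
      funext j
      rw [Bmat_mulVec e hlt y x j, hs j]
      simp
  rw [Lg_eq_BtB e hlt y]
  constructor
  · intro h0
    apply hB.1
    have hq : ((Bmat e y) *ᵥ v) ⬝ᵥ ((Bmat e y) *ᵥ v) = 0 := by
      have : v ⬝ᵥ (((Bmat e y)ᵀ * (Bmat e y)) *ᵥ v) = 0 := by rw [h0]; simp
      rwa [← Matrix.mulVec_mulVec, Matrix.dotProduct_mulVec, Matrix.vecMul_transpose] at this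
    exact dotProduct_self_eq_zero.mp hq
  · intro hs
    rw [← Matrix.mulVec_mulVec, hB.2 hs]
    simp

/-- inclusion of constant tuples -/
noncomputable def iota (k n : ℕ) : (Fin n → ℝ) →ₗ[ℝ] (Fin k × Fin n → ℝ) where
  toFun w := fun p => w p.2
  map_add' _ _ := rfl
  map_smul' _ _ := rfl

theorem stmt17 {k m n : ℕ} (e : Fin m → Fin k × Fin k)
    (hlt : ∀ j, (e j).1 < (e j).2) (hinj : Function.Injective e)
    (y : Fin m → Fin n → ℝ) (hy : ∀ j, y j ⬝ᵥ y j = 1) :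
    (∀ x : Fin k → Fin n → ℝ,
      (Lg e y) *ᵥ (fun p => x p.1 p.2) = 0 ↔
        ∀ j, y j ⬝ᵥ x (e j).1 = y j ⬝ᵥ x (e j).2) ∧
    ((∀ x : Fin k → Fin n → ℝ,
        (∀ j, y j ⬝ᵥ x (e j).1 = y j ⬝ᵥ x (e j).2) → ∀ i i', x i = x i') ↔
      (Lg e y).rank = n * (k - 1)) := by
  refine ⟨fun x => part1 e hlt y x, ?_⟩
  -- rank-nullity setup
  have hrn : (Lg e y).rank + Module.finrank ℝ (LinearMap.ker (Lg e y).mulVecLin) = k * n := by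
    have := LinearMap.finrank_range_add_finrank_ker (Lg e y).mulVecLin
    rw [Module.finrank_pi] at this
    simpa [Matrix.rank, Fintype.card_prod] using this
  have hker : ∀ v : Fin k × Fin n → ℝ,
      v ∈ LinearMap.ker (Lg e y).mulVecLin ↔
      ∀ j, y j ⬝ᵥ (fun q => v ((e j).1, q)) = y j ⬝ᵥ (fun q => v ((e j).2, q)) := by
    intro v
    have := part1 e hlt y (fun i q => v (i, q))
    simpa [Matrix.mulVecLin_apply, LinearMap.mem_ker] using this
  rcases Nat.eq_zero_or_pos k with hk0 | hk
  · -- k = 0 : both sides trivially hold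
    subst hk0
    have hr0 : (Lg e y).rank = 0 := by
      have h := Matrix.rank_le_card_height (Lg e y)
      simp only [Fintype.card_prod, Fintype.card_fin, Nat.zero_mul] at h
      omega
    constructor
    · intro _
      simp [hr0]
    · intro _ x _ i
      exact i.elim0
  · -- k ≥ 1
    obtain ⟨i0, _⟩ : ∃ _i : Fin k, True := ⟨⟨0, hk⟩, trivial⟩
    have hkn : n * (k - 1) + n = k * n := by
      cases k with
      | zero => exact absurd hk (by simp)
      | succ k' => simp [Nat.succ_sub_one, Nat.succ_mul, Nat.mul_comm]
    have hiota_inj : Function.Injective (iota k n) := by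
      intro a b hab
      funext q
      exact congrFun hab (i0, q)
    have hrange : Module.finrank ℝ (LinearMap.range (iota k n)) = n := by
      rw [LinearMap.finrank_range_of_inj hiota_inj, Module.finrank_pi]
      simp
    have hsub : LinearMap.range (iota k n) ≤ LinearMap.ker (Lg e y).mulVecLin := by
      rintro _ ⟨w, rfl⟩
      rw [hker]
      intro j
      rfl
    constructor
    · intro hsync
      have hkereq : LinearMap.ker (Lg e y).mulVecLin = LinearMap.range (iota k n) := by
        refine le_antisymm ?_ hsub
        intro v hv
        have hs := hsync (fun i q => v (i, q)) ((hker v).mp hv)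
        refine ⟨fun q => v (i0, q), ?_⟩
        funext p
        exact (congrFun (hs i0 p.1) p.2)
      rw [hkereq, hrange] at hrn
      have : (Lg e y).rank + n = n * (k - 1) + n := by rw [hrn, hkn]
      exact Nat.add_right_cancel this
    · intro hrank x hs i i'
      rw [hrank] at hrn
      have hdim : Module.finrank ℝ (LinearMap.ker (Lg e y).mulVecLin) = n := by
        have : n * (k - 1) + Module.finrank ℝ (LinearMap.ker (Lg e y).mulVecLin)
            = n * (k - 1) + n := by rw [hrn, hkn]
        exact Nat.add_left_cancel this
      have hkereq : LinearMap.range (iota k n) = LinearMap.ker (Lg e y).mulVecLin := by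
        apply Submodule.eq_of_le_of_finrank_eq hsub
        rw [hrange, hdim]
      have hv : (fun p : Fin k × Fin n => x p.1 p.2) ∈ LinearMap.ker (Lg e y).mulVecLin := by
        rw [hker]
        intro j
        exact hs j
      rw [← hkereq] at hv
      obtain ⟨w, hw⟩ := hv
      funext q
      have h1 := congrFun hw (i, q)
      have h2 := congrFun hw (i', q)
      rw [← h1, ← h2]
      rfl
end

section
/- Let n ≥ 2, let Q ∈ SO(n), and suppose all eigenvalues of Q are of the form e^{iφ_j} with |φ_j| < π/2 (equivalently, Q + Qᵀ is positive definite). Then for every unit vector y ∈ ℝ^n, yᵀ Q² y ≤ yᵀ Q y. -/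
open Matrix

theorem stmt19 {n : ℕ} (hn : 2 ≤ n) (Q : Matrix (Fin n) (Fin n) ℝ)
    (hQ : Qᵀ * Q = 1) (hd : Q.det = 1) (hpd : (Q + Qᵀ).PosDef)
    (y : Fin n → ℝ) (hy : y ⬝ᵥ y = 1) :
    y ⬝ᵥ ((Q * Q) *ᵥ y) ≤ y ⬝ᵥ (Q *ᵥ y) := by
  have hQQt : Q * Qᵀ = 1 := by
    rwa [mul_eq_one_comm] at hQ
  set S := Q + Qᵀ with hSdef
  have hSpsd : S.PosSemidef := hpd.posSemidef
  -- norm preservation: (Q x) ⬝ (Q x) = x ⬝ x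
  have hnorm : ∀ x : Fin n → ℝ, (Q *ᵥ x) ⬝ᵥ (Q *ᵥ x) = x ⬝ᵥ x := by
    intro x
    rw [Matrix.dotProduct_mulVec, ← Matrix.mulVec_transpose, Matrix.mulVec_mulVec, hQ,
      Matrix.one_mulVec]
  -- Cauchy–Schwarz consequence: x ⬝ Q x ≤ x ⬝ x
  have hCS : ∀ x : Fin n → ℝ, x ⬝ᵥ (Q *ᵥ x) ≤ x ⬝ᵥ x := by
    intro x
    have h1 := Finset.sum_mul_sq_le_sq_mul_sq Finset.univ x (Q *ᵥ x)
    have e1 : ∑ i, x i * (Q *ᵥ x) i = x ⬝ᵥ (Q *ᵥ x) := rfl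
    have e2 : ∑ i, x i ^ 2 = x ⬝ᵥ x := by simp [dotProduct, pow_two]
    have e3 : ∑ i, (Q *ᵥ x) i ^ 2 = x ⬝ᵥ x := by
      rw [← hnorm x]; simp [dotProduct, pow_two]
    rw [e1, e2, e3] at h1
    have hxx : 0 ≤ x ⬝ᵥ x := Finset.sum_nonneg fun i _ => mul_self_nonneg (x i)
    nlinarith [sq_nonneg (x ⬝ᵥ (Q *ᵥ x) - x ⬝ᵥ x)]
  -- transpose quadratic form equality
  have hqt : ∀ (M : Matrix (Fin n) (Fin n) ℝ) (x : Fin n → ℝ),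
      x ⬝ᵥ (Mᵀ *ᵥ x) = x ⬝ᵥ (M *ᵥ x) := by
    intro M x
    rw [Matrix.dotProduct_mulVec, Matrix.vecMul_transpose, dotProduct_comm]
  -- 2•1 - S is PosSemidef
  have hT : ((2 : ℝ) • (1 : Matrix (Fin n) (Fin n) ℝ) - S).PosSemidef := by
    refine Matrix.PosSemidef.of_dotProduct_mulVec_nonneg ?_ ?_
    · have h1 : ((2:ℝ) • (1 : Matrix (Fin n) (Fin n) ℝ)).IsHermitian := by
        simp [Matrix.IsHermitian]
      exact h1.sub hSpsd.isHermitian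
    · intro x
      have hx : x ⬝ᵥ (S *ᵥ x) = 2 * (x ⬝ᵥ (Q *ᵥ x)) := by
        rw [hSdef, Matrix.add_mulVec, dotProduct_add, hqt Q x]; ring
      have := hCS x
      simp only [star_trivial, Matrix.sub_mulVec, dotProduct_sub, Matrix.smul_mulVec,
        Matrix.one_mulVec, dotProduct_smul, smul_eq_mul, hx]
      linarith
  -- key: 2•S - S*S is PosSemidef via sqrt conjugation
  have hkey : ((2 : ℝ) • S - S * S).PosSemidef := by
    obtain ⟨R, hss, h2⟩ : ∃ R : Matrix (Fin n) (Fin n) ℝ, R * R = S ∧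
        (R * ((2 : ℝ) • (1 : Matrix (Fin n) (Fin n) ℝ) - S) * R).PosSemidef := by
      open scoped MatrixOrder in
      refine ⟨CFC.sqrt S, CFC.sqrt_mul_sqrt_self S hSpsd.nonneg, ?_⟩
      open scoped MatrixOrder in
      have hRH : (CFC.sqrt S)ᴴ = CFC.sqrt S := (CFC.sqrt_nonneg S).posSemidef.isHermitian.eq
      have h2 := hT.mul_mul_conjTranspose_same (CFC.sqrt S)
      rwa [hRH] at h2
    have h3 : R * S * R = S * S := by
      rw [← hss]; simp only [Matrix.mul_assoc]
    have heq : R * ((2 : ℝ) • (1 : Matrix (Fin n) (Fin n) ℝ) - S) * R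
        = (2 : ℝ) • S - S * S := by
      rw [Matrix.mul_sub, Matrix.sub_mul, h3, mul_smul_comm, Matrix.mul_one, smul_mul_assoc,
        hss]
    rwa [heq] at h2
  -- expand quadratic forms
  have hS2 : y ⬝ᵥ ((S * S) *ᵥ y) = 2 * (y ⬝ᵥ ((Q * Q) *ᵥ y)) + 2 := by
    have : S * S = Q * Q + (Q * Q)ᵀ + (1 + 1) := by
      rw [hSdef]
      rw [Matrix.add_mul, Matrix.mul_add, Matrix.mul_add, hQ, hQQt, Matrix.transpose_mul]
      abel
    rw [this, Matrix.add_mulVec, Matrix.add_mulVec, dotProduct_add,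
      dotProduct_add, hqt (Q*Q) y, Matrix.add_mulVec, dotProduct_add,
      Matrix.one_mulVec, hy]
    ring
  have hSy : y ⬝ᵥ (S *ᵥ y) = 2 * (y ⬝ᵥ (Q *ᵥ y)) := by
    rw [hSdef, Matrix.add_mulVec, dotProduct_add, hqt Q y]; ring
  have h4 := hkey.dotProduct_mulVec_nonneg y
  simp only [star_trivial, Matrix.sub_mulVec, dotProduct_sub, Matrix.smul_mulVec,
    dotProduct_smul, smul_eq_mul, hS2, hSy] at h4
  have h5 := hCS y
  rw [hy] at h5
  linarith
end
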